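/- arXiv:1604.02833 — 6 statements merged into one kernel-verified Lean document; each statement's English description precedes it below -/
import Mathlib

section
/- If d is a proper tree decomposition of a finite simple graph g, then bags(d) is an antichain with respect to set inclusion; that is, no bag of d is contained in a different bag of d. -/
open SimpleGraph

/-- A (candidate) tree decomposition: a finite tree together with a bag for each tree node. -/
structure TreeDecomp (V : Type) where
  T : Type
  tFinite : Finite T
  tree : SimpleGraph T
  isTree : tree.IsTree
  β : T → Set V

/-- The set of bags of a tree decomposition. -/
def TreeDecomp.bags {V : Type} (d : TreeDecomp V) : Set (Set V) := Set.range d.β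

/-- `d` is a tree decomposition of the graph `g`. -/
def IsTD {V : Type} (g : SimpleGraph V) (d : TreeDecomp V) : Prop :=
  (∀ v : V, ∃ i : d.T, v ∈ d.β i) ∧
  (∀ u v : V, g.Adj u v → ∃ i : d.T, u ∈ d.β i ∧ v ∈ d.β i) ∧
  (∀ (i j k : d.T) (p : d.tree.Walk i k),
    p.IsPath → j ∈ p.support → d.β i ∩ d.β k ⊆ d.β j)

/-- `d' ⊑ d`: every bag of `d'` is contained in some bag of `d`. -/
def Subsumes {V : Type} (d' d : TreeDecomp V) : Prop :=
  ∀ b ∈ d'.bags, ∃ b' ∈ d.bags, b ⊆ b'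

/-- `d'` strictly subsumes `d`. -/
def StrictlySubsumes {V : Type} (d' d : TreeDecomp V) : Prop :=
  Subsumes d' d ∧ ¬ d.bags ⊆ d'.bags

/-- `d` is a proper tree decomposition of `g`. -/
def IsProperTD {V : Type} (g : SimpleGraph V) (d : TreeDecomp V) : Prop :=
  IsTD g d ∧ ∀ d' : TreeDecomp V, IsTD g d' → ¬ StrictlySubsumes d' d

/-- The graph obtained from `g` by saturating every bag of `d`. -/
def saturate {V : Type} (g : SimpleGraph V) (d : TreeDecomp V) : SimpleGraph V where
  Adj u v := g.Adj u v ∨ (u ≠ v ∧ ∃ i : d.T, u ∈ d.β i ∧ v ∈ d.β i)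
  symm := by
    constructor
    intro u v h
    rcases h with h | ⟨hne, i, hu, hv⟩
    · exact Or.inl h.symm
    · exact Or.inr ⟨hne.symm, i, hv, hu⟩
  loopless := by
    constructor
    intro u h
    rcases h with h | ⟨hne, _⟩
    · exact g.loopless.irrefl u h
    · exact hne rfl

/-- A graph is chordal if every cycle of length greater than three has a chord,
i.e. an edge joining two vertices of the cycle that are non-adjacent on the cycle. -/
def IsChordal {V : Type} (h : SimpleGraph V) : Prop :=
  ∀ (v : V) (c : h.Walk v v), c.IsCycle → 3 < c.length →
    ∃ u w : V, u ∈ c.support ∧ w ∈ c.support ∧ h.Adj u w ∧ s(u, w) ∉ c.edges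

/-- The set of maximal cliques of `g`. -/
def MaxClq {V : Type} (g : SimpleGraph V) : Set (Set V) :=
  {C | g.IsClique C ∧ ∀ C' : Set V, g.IsClique C' → C ⊆ C' → C = C'}

/-- The set of minimal triangulations of `g` (chordal supergraphs on the same vertex
set, minimal with respect to edge inclusion). -/
def MinTri {V : Type} (g : SimpleGraph V) : Set (SimpleGraph V) :=
  {h | g ≤ h ∧ IsChordal h ∧ ∀ h' : SimpleGraph V, g ≤ h' → h' < h → ¬ IsChordal h'}

/-!
Suppose the bag `B` at some node is strictly contained in the bag at `j`. Along the path from a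
`B`-node to `j` there is an edge `i i'` with `β i = B ≠ β i'`, and `B ⊆ β i'` since `β i'` lies
between two bags containing `B`. Replacing the bag at `i` by the bag at `i'` gives a tree
decomposition that uses only old bags and has one `B`-node fewer. Iterating removes `B`
altogether, so the result strictly subsumes `d`, contradicting properness.
-/

theorem SimpleGraph.IsAcyclic.support_subset_of_isPath {T : Type*} {G : SimpleGraph T}
    (hG : G.IsAcyclic) {a c : T} {p : G.Walk a c} (hp : p.IsPath) (w : G.Walk a c) :
    p.support ⊆ w.support := by
  classical
  obtain rfl : p = w.bypass :=
    congrArg Subtype.val ((hG.subsingleton_path a c).elim ⟨p, hp⟩ ⟨w.bypass, w.bypass_isPath⟩)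
  exact w.support_bypass_subset_support

namespace TreeDecomp

variable {V : Type} {g : SimpleGraph V} (d : TreeDecomp V)

abbrev precomp (m : d.T → d.T) : TreeDecomp V := { d with β := d.β ∘ m }

theorem bags_precomp_subset (m : d.T → d.T) : (d.precomp m).bags ⊆ d.bags :=
  Set.range_comp_subset_range m d.β

variable {d}

theorem isTD_precomp (hd : IsTD g d) {m : d.T → d.T} (hsub : ∀ k, d.β k ⊆ d.β (m k))
    (hwalk : ∀ k, ∃ w : d.tree.Walk k (m k), ∀ z ∈ w.support, d.β (m k) ⊆ d.β (m z)) :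
    IsTD g (d.precomp m) := by
  obtain ⟨hvert, hedge, hcoh⟩ := hd
  refine ⟨fun v => ?_, fun u v huv => ?_, ?_⟩
  · obtain ⟨i, hi⟩ := hvert v
    exact ⟨i, hsub i hi⟩
  · obtain ⟨i, hui, hvi⟩ := hedge u v huv
    exact ⟨i, hsub i hui, hsub i hvi⟩
  · intro a b c p hp hb x ⟨hxa, hxc⟩
    obtain ⟨wa, hwa⟩ := hwalk a
    obtain ⟨wc, hwc⟩ := hwalk c
    obtain ⟨q, hq⟩ := d.isTree.connected.preconnected.exists_isPath (m a) (m c)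
    have hxq : ∀ z ∈ q.support, x ∈ d.β z := fun z hz => hcoh _ z _ q hq hz ⟨hxa, hxc⟩
    -- `x` stays in the new bags along the walk `a ⇝ m a ⇝ m c ⇝ c`, hence along the path `p`
    have hw : ∀ z ∈ (wa.append (q.append wc.reverse)).support, x ∈ d.β (m z) := by
      intro z hz
      simp only [Walk.mem_support_append_iff, Walk.support_reverse, List.mem_reverse] at hz
      rcases hz with hz | hz | hz
      · exact hwa z hz hxa
      · exact hsub z (hxq z hz)
      · exact hwc z hz hxc
    exact hw b (d.isTree.isAcyclic.support_subset_of_isPath hp _ hb)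

open Classical in
theorem isTD_precomp_update (hd : IsTD g d) {i i' : d.T} (hadj : d.tree.Adj i i')
    (hsub : d.β i ⊆ d.β i') : IsTD g (d.precomp (Function.update id i i')) := by
  refine isTD_precomp hd (fun k => ?_) (fun k => ?_)
  · by_cases hk : k = i
    · simpa [hk] using hsub
    · simp [hk]
  · by_cases hk : k = i
    · subst hk
      rw [Function.update_self]
      refine ⟨hadj.toWalk, fun z hz => ?_⟩
      obtain rfl | rfl : z = k ∨ z = i' := by simpa using hz
      all_goals simp [hadj.ne.symm]
    · rw [Function.update_of_ne hk]
      exact ⟨Walk.nil, fun z hz => by simp_all⟩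

theorem exists_boundary_adj_of_ssubset (hd : IsTD g d) {B : Set V} {i₀ j : d.T}
    (hi₀ : d.β i₀ = B) (hj : B ⊂ d.β j) :
    ∃ i i', d.tree.Adj i i' ∧ d.β i = B ∧ d.β i' ≠ B ∧ B ⊆ d.β i' := by
  obtain ⟨p, hp⟩ := d.isTree.connected.preconnected.exists_isPath i₀ j
  obtain ⟨e, he, hfst, hsnd⟩ :=
    p.exists_boundary_dart {k | d.β k = B} hi₀ fun h => hj.ne h.symm
  refine ⟨e.fst, e.snd, e.adj, hfst, hsnd, fun x hx => ?_⟩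
  exact hd.2.2 i₀ e.snd j p hp (p.dart_snd_mem_support_of_mem_darts he)
    ⟨hi₀ ▸ hx, hj.subset hx⟩

theorem exists_isTD_bags_subset_not_mem (hd : IsTD g d) {B : Set V} {j : d.T}
    (hj : B ⊂ d.β j) : ∃ d' : TreeDecomp V, IsTD g d' ∧ d'.bags ⊆ d.bags ∧ B ∉ d'.bags := by
  classical
  induction h : {k | d.β k = B}.ncard using Nat.strong_induction_on generalizing d with
  | _ n ih =>
  have := d.tFinite
  by_cases hB : B ∈ d.bags
  swap
  · exact ⟨d, hd, subset_rfl, hB⟩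
  obtain ⟨i₀, hi₀⟩ := hB
  obtain ⟨i, i', hadj, hi, hi', hsub⟩ := exists_boundary_adj_of_ssubset hd hi₀ hj
  set d₁ := d.precomp (Function.update id i i')
  have hd₁ : ∀ k, d₁.β k = B ↔ k ≠ i ∧ d.β k = B := by
    intro k
    by_cases hk : k = i
    · simpa [d₁, hk] using hi'
    · simp [d₁, hk]
  have hlt : {k | d₁.β k = B} ⊂ {k | d.β k = B} :=
    ⟨fun k hk => ((hd₁ k).1 hk).2, fun hsup => ((hd₁ i).1 (hsup hi)).1 rfl⟩
  have hji : j ≠ i := by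
    rintro rfl
    exact hj.ne hi.symm
  have hj₁ : B ⊂ d₁.β j := by
    simpa [d₁, Function.update_of_ne hji] using hj
  obtain ⟨d', hd', hbags, hB'⟩ :=
    ih _ (h ▸ Set.ncard_lt_ncard hlt) (isTD_precomp_update hd hadj (hi ▸ hsub)) hj₁ rfl
  exact ⟨d', hd', hbags.trans (d.bags_precomp_subset _), hB'⟩

end TreeDecomp

theorem proper_bags_antichain_general {V : Type} (g : SimpleGraph V)
    (d : TreeDecomp V) (hd : IsProperTD g d) :
    ∀ b₁ ∈ d.bags, ∀ b₂ ∈ d.bags, b₁ ⊆ b₂ → b₁ = b₂ := by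
  rintro b₁ hb₁ b₂ ⟨j, rfl⟩ hsub
  by_contra hne
  obtain ⟨d', hd', hbags, hb₁'⟩ := d.exists_isTD_bags_subset_not_mem hd.1 (hsub.ssubset_of_ne hne)
  exact hd.2 d' hd' ⟨fun b hb => ⟨b, hbags hb, subset_rfl⟩, fun h => hb₁' (h hb₁)⟩

/-- The bags of a proper tree decomposition form an antichain w.r.t. inclusion. -/
theorem proper_bags_antichain {V : Type} [Fintype V] (g : SimpleGraph V)
    (d : TreeDecomp V) (hd : IsProperTD g d) :
    ∀ b₁ ∈ d.bags, ∀ b₂ ∈ d.bags, b₁ ⊆ b₂ → b₁ = b₂ :=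
  proper_bags_antichain_general g d hd
end

section
/- If d is a tree decomposition of a finite simple graph g, then saturate(g,d) is a triangulation of g; that is, saturate(g,d) is a chordal graph on V(g) whose edge set contains E(g). -/
open SimpleGraph

/-!
Root the decomposition tree at `r` and let a top bag of a vertex `v` be a bag containing `v`
closest to `r`. The bags containing `v` form a subtree, so its top bag lies on the tree path from
every bag containing `v` to `r`. On a cycle of `saturate g d`, pick the vertex `u` whose top bag
is farthest from `r`. A cycle-neighbour `w` of `u` shares some bag `x` with `u`; the top bags of
`u` and `w` both lie on the path from `x` to `r`, the one of `u` between `x` and the one of `w`,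
hence it contains `w`. So the two cycle-neighbours of `u` share a bag and are adjacent, and on a
cycle of length greater than three this edge is a chord.
-/

namespace SimpleGraph

variable {V : Type*} {G : SimpleGraph V}

namespace Walk

lemma IsPath.append {u v w : V} {p : G.Walk u v} {q : G.Walk v w} (hp : p.IsPath)
    (hq : q.IsPath) (h : ∀ x ∈ p.support, x ∈ q.support → x = v) : (p.append q).IsPath := by
  rw [isPath_def, support_append, List.nodup_append]
  refine ⟨hp.support_nodup, hq.support_nodup.tail, fun x hxp y hyq hxy => ?_⟩
  subst hxy
  obtain rfl := h x hxp (List.mem_of_mem_tail hyq)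
  exact (List.nodup_cons.mp (q.cons_tail_support ▸ hq.support_nodup)).1 hyq

lemma IsCycle.mk_snd_penultimate_notMem_edges {u : V} {c : G.Walk u u} (hc : c.IsCycle)
    (hlen : 3 < c.length) : s(c.snd, c.penultimate) ∉ c.edges := by
  have hnil := hc.not_nil
  have hedges : c.edges = s(u, c.snd) :: c.tail.edges := by
    conv_lhs => rw [← c.cons_tail_eq hnil]
    rfl
  rw [hedges, List.mem_cons, Sym2.eq_iff]
  rintro ((⟨hsnd, -⟩ | ⟨-, hpen⟩) | hmem)
  · exact (c.adj_snd hnil).ne hsnd.symm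
  · exact (c.adj_penultimate hnil).ne hpen
  · have h2 : c.penultimate = c.getVert 2 := by
      rw [hc.isPath_tail.eq_snd_of_mem_edges hmem, snd, getVert_tail]
    have := hc.getVert_injOn (by simp; omega) (by simp; omega) h2
    omega

end Walk

lemma IsAcyclic.eq_of_isPath (hG : G.IsAcyclic) {u v : V} {p q : G.Walk u v} (hp : p.IsPath)
    (hq : q.IsPath) : p = q :=
  congrArg Subtype.val ((hG.subsingleton_path u v).elim ⟨p, hp⟩ ⟨q, hq⟩)

lemma IsAcyclic.length_eq_dist_of_isPath (hG : G.IsAcyclic) {u v : V} {p : G.Walk u v}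
    (hp : p.IsPath) : p.length = G.dist u v := by
  obtain ⟨q, hq, hqlen⟩ := p.reachable.exists_path_of_dist
  rw [hG.eq_of_isPath hp hq, hqlen]

namespace IsTree

lemma mem_support_iff_dist_add_dist_eq (hG : G.IsTree) {u v w : V} {p : G.Walk u v}
    (hp : p.IsPath) :
    w ∈ p.support ↔ G.dist u w + G.dist w v = G.dist u v := by
  classical
  constructor
  · intro hw
    rw [← hG.isAcyclic.length_eq_dist_of_isPath (hp.takeUntil hw),
      ← hG.isAcyclic.length_eq_dist_of_isPath (hp.dropUntil hw),
      ← hG.isAcyclic.length_eq_dist_of_isPath hp, ← Walk.length_append, Walk.take_spec]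
  · intro h
    obtain ⟨p₁, hp₁⟩ := hG.connected.exists_walk_length_eq_dist u w
    obtain ⟨p₂, hp₂⟩ := hG.connected.exists_walk_length_eq_dist w v
    have hpath : (p₁.append p₂).IsPath :=
      (p₁.append p₂).isPath_of_length_eq_dist (by rw [Walk.length_append, hp₁, hp₂, h])
    rw [hG.isAcyclic.eq_of_isPath hp hpath, Walk.mem_support_append_iff]
    exact Or.inl p₁.end_mem_support

lemma dist_add_dist_eq_of_forall (hG : G.IsTree) {u v w : V}
    (h : ∀ x, G.dist u x + G.dist x w = G.dist u w → G.dist w x + G.dist x v = G.dist w v →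
      x = w) :
    G.dist u w + G.dist w v = G.dist u v := by
  obtain ⟨p₁, hp₁, hl₁⟩ := hG.connected.exists_path_of_dist u w
  obtain ⟨p₂, hp₂, hl₂⟩ := hG.connected.exists_path_of_dist w v
  have hpath : (p₁.append p₂).IsPath := hp₁.append hp₂ fun x hx₁ hx₂ =>
    h x ((hG.mem_support_iff_dist_add_dist_eq hp₁).mp hx₁)
      ((hG.mem_support_iff_dist_add_dist_eq hp₂).mp hx₂)
  rw [← hl₁, ← hl₂, ← Walk.length_append, hG.isAcyclic.length_eq_dist_of_isPath hpath]

lemma dist_add_dist_eq_of_dist_le (hG : G.IsTree) {x r i j : V}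
    (hi : G.dist x i + G.dist i r = G.dist x r) (hj : G.dist x j + G.dist j r = G.dist x r)
    (hle : G.dist j r ≤ G.dist i r) : G.dist x i + G.dist i j = G.dist x j := by
  classical
  obtain ⟨p, hp, -⟩ := hG.connected.exists_path_of_dist x r
  have hip := (hG.mem_support_iff_dist_add_dist_eq hp).mpr hi
  have hjp := (hG.mem_support_iff_dist_add_dist_eq hp).mpr hj
  rw [← p.take_spec hip, Walk.mem_support_append_iff] at hjp
  rcases hjp with hj' | hj'
  · have := (hG.mem_support_iff_dist_add_dist_eq (hp.takeUntil hip)).mp hj'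
    have : G.dist i j = G.dist j i := G.dist_comm
    omega
  · have := (hG.mem_support_iff_dist_add_dist_eq (hp.dropUntil hip)).mp hj'
    omega

end IsTree

end SimpleGraph

lemma isChordal_of_forall_isCycle_exists_isClique {V : Type} {H : SimpleGraph V}
    (h : ∀ (v : V) (c : H.Walk v v), c.IsCycle →
      ∃ u ∈ c.support, H.IsClique {w | w ∈ c.support ∧ H.Adj u w}) :
    IsChordal H := by
  classical
  intro v c hc hlen
  obtain ⟨u, hu, hclique⟩ := h v c hc
  set c' := c.rotate u hu
  have hc' : c'.IsCycle := hc.rotate hu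
  have hnil := hc'.not_nil
  have hlen' : 3 < c'.length := by simpa [c'] using hlen
  have hsnd : c'.snd ∈ c.support := (c.mem_support_rotate_iff u hu).mp (c'.getVert_mem_support _)
  have hpen : c'.penultimate ∈ c.support :=
    (c.mem_support_rotate_iff u hu).mp (c'.getVert_mem_support _)
  refine ⟨c'.snd, c'.penultimate, hsnd, hpen, ?_, fun he => ?_⟩
  · exact hclique ⟨hsnd, c'.adj_snd hnil⟩ ⟨hpen, (c'.adj_penultimate hnil).symm⟩
      hc'.snd_ne_penultimate
  · exact hc'.mk_snd_penultimate_notMem_edges hlen' ((c.rotate_edges u hu).mem_iff.mpr he)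

namespace TreeDecomp

variable {V : Type} (d : TreeDecomp V)

def IsTopBag (r : d.T) (v : V) (i : d.T) : Prop :=
  v ∈ d.β i ∧ ∀ j, v ∈ d.β j → d.tree.dist i r ≤ d.tree.dist j r

lemma exists_isTopBag (r : d.T) {v : V} (hv : ∃ i, v ∈ d.β i) : ∃ i, d.IsTopBag r v i := by
  obtain ⟨i, hi⟩ := hv
  obtain ⟨j, hj, hmin⟩ :=
    (measure fun j => d.tree.dist j r).wf.has_min {j | v ∈ d.β j} ⟨i, hi⟩
  exact ⟨j, hj, fun k hk => not_lt.mp (hmin k hk)⟩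

lemma isClique_saturate_β (g : SimpleGraph V) (i : d.T) : (saturate g d).IsClique (d.β i) :=
  fun _ ha _ hb hab => Or.inr ⟨hab, i, ha, hb⟩

end TreeDecomp

namespace IsTD

variable {V : Type} {g : SimpleGraph V} {d : TreeDecomp V}

lemma exists_mem_β_of_saturate_adj (hd : IsTD g d) {u v : V} (h : (saturate g d).Adj u v) :
    ∃ i, u ∈ d.β i ∧ v ∈ d.β i := by
  rcases h with h | ⟨-, h⟩
  · exact hd.2.1 u v h
  · exact h

lemma mem_of_dist_add_dist_eq (hd : IsTD g d) {v : V} {i j k : d.T} (hi : v ∈ d.β i)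
    (hk : v ∈ d.β k) (h : d.tree.dist i j + d.tree.dist j k = d.tree.dist i k) :
    v ∈ d.β j := by
  obtain ⟨p, hp, -⟩ := d.isTree.connected.exists_path_of_dist i k
  exact hd.2.2 i j k p hp ((d.isTree.mem_support_iff_dist_add_dist_eq hp).mpr h) ⟨hi, hk⟩

lemma dist_add_dist_eq_of_isTopBag (hd : IsTD g d) {r i x : d.T} {v : V} (hi : d.IsTopBag r v i)
    (hx : v ∈ d.β x) : d.tree.dist x i + d.tree.dist i r = d.tree.dist x r := by
  refine d.isTree.dist_add_dist_eq_of_forall fun y hxy hyr => ?_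
  have := hi.2 y (hd.mem_of_dist_add_dist_eq hx hi.1 hxy)
  exact (d.isTree.connected.dist_eq_zero_iff.mp (by omega)).symm

lemma mem_of_isTopBag (hd : IsTD g d) {r i j x : d.T} {u v : V} (hu : d.IsTopBag r u i)
    (hv : d.IsTopBag r v j) (hux : u ∈ d.β x) (hvx : v ∈ d.β x)
    (hle : d.tree.dist j r ≤ d.tree.dist i r) : v ∈ d.β i :=
  hd.mem_of_dist_add_dist_eq hvx hv.1 (d.isTree.dist_add_dist_eq_of_dist_le
    (hd.dist_add_dist_eq_of_isTopBag hu hux) (hd.dist_add_dist_eq_of_isTopBag hv hvx) hle)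

lemma exists_forall_saturate_adj_mem_β (hd : IsTD g d) (S : Finset V) (hS : S.Nonempty) :
    ∃ u ∈ S, ∃ i, ∀ w ∈ S, (saturate g d).Adj u w → w ∈ d.β i := by
  obtain ⟨r⟩ := d.isTree.connected.nonempty
  choose top htop using fun v => d.exists_isTopBag r (hd.1 v)
  obtain ⟨u, hu, hmax⟩ := S.exists_max_image (fun v => d.tree.dist (top v) r) hS
  refine ⟨u, hu, top u, fun w hw huw => ?_⟩
  obtain ⟨x, hux, hwx⟩ := hd.exists_mem_β_of_saturate_adj huw
  exact hd.mem_of_isTopBag (htop u) (htop w) hux hwx (hmax w hw)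

end IsTD

theorem saturate_is_triangulation_general {V : Type} (g : SimpleGraph V)
    (d : TreeDecomp V) (hd : IsTD g d) :
    g ≤ saturate g d ∧ IsChordal (saturate g d) := by
  classical
  refine ⟨fun u v h => Or.inl h, isChordal_of_forall_isCycle_exists_isClique fun v c _ => ?_⟩
  obtain ⟨u, hu, i, hi⟩ :=
    hd.exists_forall_saturate_adj_mem_β c.support.toFinset ⟨v, by simp⟩
  exact ⟨u, List.mem_toFinset.mp hu, (d.isClique_saturate_β g i).subset
    fun w hw => hi w (List.mem_toFinset.mpr hw.1) hw.2⟩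

/-- `saturate g d` is a triangulation of `g`: a chordal graph on the vertices of `g`
whose edge set contains that of `g`. -/
theorem saturate_is_triangulation {V : Type} [Fintype V] (g : SimpleGraph V)
    (d : TreeDecomp V) (hd : IsTD g d) :
    g ≤ saturate g d ∧ IsChordal (saturate g d) :=
  saturate_is_triangulation_general g d hd
end

section
/- Let g be a finite simple graph, let h be a minimal triangulation of g, and let d be a proper tree decomposition of h. Then d is a proper tree decomposition of g, and saturate(g,d) = h. -/
open SimpleGraph

/-!
Let `h` be chordal and `d` a proper tree decomposition of `h`. A chordal graph has a tree
decomposition into cliques; by the Helly property of subtrees each of its bags lies in a bag of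
`d`, so properness forces every bag of `d` to be one of these cliques, whence `saturate g d = h`.
If a tree decomposition `d'` of `g` strictly subsumed `d`, then `saturate g d'` would lie between
`g` and `h` and be chordal, since a graph with a tree decomposition into cliques is chordal; by
minimality it would equal `h`, and `d'` would be a tree decomposition of `h` strictly subsuming `d`.
-/

namespace SimpleGraph

variable {V : Type*} {G : SimpleGraph V}

namespace Walk

variable {u v : V}

theorem exists_length_lt_of_adj_getVert (p : G.Walk u v) {i j : ℕ} (hij : i + 2 ≤ j)
    (hj : j ≤ p.length) (hadj : G.Adj (p.getVert i) (p.getVert j)) :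
    ∃ q : G.Walk u v, q.length < p.length ∧ q.support ⊆ p.support := by
  refine ⟨(p.take i).append (cons hadj (p.drop j)), ?_, ?_⟩
  · simp only [length_append, length_cons, take_length, drop_length]
    omega
  · intro w hw
    rw [mem_support_append_iff, support_cons, List.mem_cons] at hw
    rcases hw with hw | rfl | hw
    · exact (p.isSubwalk_take i).support_subset hw
    · exact p.getVert_mem_support i
    · exact (p.isSubwalk_drop j).support_subset hw

theorem exists_length_lt_of_isChord (p : G.Walk u v) {e : Sym2 V} (he : p.IsChord e) :
    ∃ q : G.Walk u v, q.length < p.length ∧ q.support ⊆ p.support := by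
  induction e using Sym2.ind with
  | _ x y =>
  obtain ⟨hxy, hne, hx, hy⟩ := isChord_sym2Mk.mp he
  obtain ⟨i, rfl, hi⟩ := mem_support_iff_exists_getVert.mp hx
  obtain ⟨j, rfl, hj⟩ := mem_support_iff_exists_getVert.mp hy
  have hsucc : ∀ k, k < p.length → s(p.getVert k, p.getVert (k + 1)) ∈ p.edges :=
    fun k hk => (p.mk_mem_edges_iff_exists).mpr ⟨k, hk, rfl⟩
  rcases lt_trichotomy i j with hij | rfl | hij
  · by_cases h : j = i + 1
    · exact absurd (h ▸ hsucc i (by omega)) hne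
    · exact p.exists_length_lt_of_adj_getVert (by omega) hj hxy
  · exact absurd rfl hxy.ne
  · by_cases h : i = j + 1
    · exact absurd (Sym2.eq_swap ▸ h ▸ hsucc j (by omega)) hne
    · exact p.exists_length_lt_of_adj_getVert (by omega) hi hxy.symm

theorem exists_isPath_isChordless (p : G.Walk u v) :
    ∃ q : G.Walk u v, q.IsPath ∧ q.IsChordless ∧ q.support ⊆ p.support := by
  classical
  induction hn : p.length using Nat.strong_induction_on generalizing p with
  | _ n ih =>
  by_cases hc : p.bypass.IsChordless
  · exact ⟨p.bypass, p.bypass_isPath, hc, p.support_bypass_subset_support⟩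
  obtain ⟨e, he⟩ : ∃ e, p.bypass.IsChord e := by simpa [IsChordless] using hc
  obtain ⟨q, hq, hqp⟩ := p.bypass.exists_length_lt_of_isChord he
  obtain ⟨r, hr, hrc, hrq⟩ := ih _ (hn ▸ hq.trans_le p.length_bypass_le_length) q rfl
  exact ⟨r, hr, hrc, fun w hw => p.support_bypass_subset_support (hqp (hrq hw))⟩

theorem IsCycle.mk_getVert_notMem_edges {c : G.Walk u u} (hc : c.IsCycle) {i j : ℕ}
    (hij : i + 2 ≤ j) (hj : j < c.length) (hwrap : i = 0 → j + 1 < c.length) :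
    s(c.getVert i, c.getVert j) ∉ c.edges := by
  have hidx : ∀ m n, m < c.length → n ≤ c.length → c.getVert m = c.getVert n →
      m = n ∨ (m = 0 ∧ n = c.length) := by
    intro m n hm hn he
    by_cases hn' : n < c.length
    · exact Or.inl (hc.getVert_injOn' (by simp; omega) (by simp; omega) he)
    · obtain rfl : n = c.length := by omega
      rw [getVert_length, hc.getVert_endpoint_iff hm.le] at he
      omega
  rw [mk_mem_edges_iff_exists]
  rintro ⟨l, hl, he⟩
  rcases Sym2.eq_iff.mp he with ⟨h₁, h₂⟩ | ⟨h₁, h₂⟩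
  · have := hidx l i hl (by omega) h₁
    have := hidx j (l + 1) hj hl h₂.symm
    omega
  · have := hidx l j hl (by omega) h₁
    have := hidx i (l + 1) (by omega) hl h₂.symm
    omega

end Walk

theorem IsAcyclic.support_subset_of_isPath_s6 (hG : G.IsAcyclic) {u v : V} {p : G.Walk u v}
    (hp : p.IsPath) (q : G.Walk u v) : p.support ⊆ q.support := by
  classical
  have : p = q.bypass :=
    congrArg Subtype.val ((hG.subsingleton_path u v).elim ⟨p, hp⟩ ⟨q.bypass, q.bypass_isPath⟩)
  exact this ▸ q.support_bypass_subset_support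

variable {T : Type*} {t : SimpleGraph T}

/-- In a tree, the path-closed vertex sets are exactly the vertex sets of subtrees. -/
def IsPathClosed (t : SimpleGraph T) (A : Set T) : Prop :=
  ∀ ⦃i k : T⦄ (p : t.Walk i k), p.IsPath → i ∈ A → k ∈ A → ∀ j ∈ p.support, j ∈ A

namespace IsPathClosed

variable {A B : Set T}

theorem inter (hA : t.IsPathClosed A) (hB : t.IsPathClosed B) : t.IsPathClosed (A ∩ B) :=
  fun _ _ p hp hi hk j hj => ⟨hA p hp hi.1 hk.1 j hj, hB p hp hi.2 hk.2 j hj⟩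

theorem exists_isPath (hA : t.IsPathClosed A) (ht : t.Connected) {i k : T} (hi : i ∈ A)
    (hk : k ∈ A) : ∃ p : t.Walk i k, p.IsPath ∧ ∀ j ∈ p.support, j ∈ A := by
  classical
  obtain ⟨w⟩ := ht.preconnected i k
  exact ⟨w.bypass, w.bypass_isPath, hA _ w.bypass_isPath hi hk⟩

end IsPathClosed

theorem IsAcyclic.isPathClosed (ht : t.IsAcyclic) {A : Set T}
    (hA : ∀ i ∈ A, ∀ k ∈ A, ∃ q : t.Walk i k, ∀ j ∈ q.support, j ∈ A) : t.IsPathClosed A :=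
  fun i k p hp hi hk j hj => by
    obtain ⟨q, hq⟩ := hA i hi k hk
    exact hq j (ht.support_subset_of_isPath_s6 hp q hj)

namespace IsTree

variable {A B C : Set T}

theorem isPathClosed_union (ht : t.IsTree) (hA : t.IsPathClosed A) (hB : t.IsPathClosed B)
    (hAB : (A ∩ B).Nonempty) : t.IsPathClosed (A ∪ B) := by
  obtain ⟨m, hmA, hmB⟩ := hAB
  have toM : ∀ i ∈ A ∪ B, ∃ q : t.Walk i m, ∀ j ∈ q.support, j ∈ A ∪ B := by
    rintro i (hi | hi)
    · obtain ⟨q, -, hq⟩ := hA.exists_isPath ht.connected hi hmA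
      exact ⟨q, fun j hj => Or.inl (hq j hj)⟩
    · obtain ⟨q, -, hq⟩ := hB.exists_isPath ht.connected hi hmB
      exact ⟨q, fun j hj => Or.inr (hq j hj)⟩
  refine ht.isAcyclic.isPathClosed fun i hi k hk => ?_
  obtain ⟨q, hq⟩ := toM i hi
  obtain ⟨r, hr⟩ := toM k hk
  refine ⟨q.append r.reverse, fun j hj => ?_⟩
  rw [Walk.mem_support_append_iff, Walk.support_reverse, List.mem_reverse] at hj
  exact hj.elim (hq j) (hr j)

theorem isPathClosed_iUnion_Icc (ht : t.IsTree) (A : ℕ → Set T)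
    (hA : ∀ j, t.IsPathClosed (A j)) {m n : ℕ} (hmn : m ≤ n)
    (hAA : ∀ j, m ≤ j → j < n → (A j ∩ A (j + 1)).Nonempty) :
    t.IsPathClosed (⋃ j ∈ Set.Icc m n, A j) := by
  induction n, hmn using Nat.le_induction with
  | base => simpa using hA m
  | succ n hmn ih =>
    have hIcc : Set.Icc m (n + 1) = insert (n + 1) (Set.Icc m n) := by
      simpa using Order.Icc_succ_right (a := m) (b := n) (by simp; omega)
    rw [hIcc, Set.biUnion_insert, Set.union_comm]
    obtain ⟨i, hi, hi'⟩ := hAA n hmn n.lt_succ_self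
    refine ht.isPathClosed_union (ih fun j hmj hjn => hAA j hmj (hjn.trans n.lt_succ_self))
      (hA (n + 1)) ⟨i, ?_, hi'⟩
    exact Set.mem_biUnion ⟨hmn, le_rfl⟩ hi

theorem inter_inter_nonempty (ht : t.IsTree) (hA : t.IsPathClosed A) (hB : t.IsPathClosed B)
    (hC : t.IsPathClosed C) (hAB : (A ∩ B).Nonempty) (hBC : (B ∩ C).Nonempty)
    (hCA : (C ∩ A).Nonempty) : (A ∩ B ∩ C).Nonempty := by
  classical
  obtain ⟨z, hzA, hzB⟩ := hAB
  obtain ⟨x, hxB, hxC⟩ := hBC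
  obtain ⟨y, hyC, hyA⟩ := hCA
  obtain ⟨q, hq, hqC⟩ := hC.exists_isPath ht.connected hxC hyC
  obtain ⟨r, hr, hrB⟩ := hB.exists_isPath ht.connected hxB hzB
  obtain ⟨p, hp, hpA⟩ := hA.exists_isPath ht.connected hyA hzA
  -- `p` runs inside `q ∪ r`; where it leaves `q` it must already be on `r`
  have hpqr : p.support ⊆ q.support ∪ r.support := by
    intro j hj
    have := ht.isAcyclic.support_subset_of_isPath_s6 hp (q.reverse.append r) hj
    rw [Walk.mem_support_append_iff, Walk.support_reverse, List.mem_reverse] at this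
    exact List.mem_union_iff.mpr this
  by_cases hzq : z ∈ q.support
  · exact ⟨z, ⟨hzA, hzB⟩, hqC z hzq⟩
  obtain ⟨e, he, he₁, he₂⟩ := p.exists_boundary_dart {j | j ∈ q.support} q.end_mem_support hzq
  have he₂r : e.snd ∈ r.support :=
    (List.mem_union_iff.mp (hpqr (p.dart_snd_mem_support_of_mem_darts he))).resolve_left he₂
  by_cases he₁r : e.fst ∈ r.support
  · exact ⟨e.fst, ⟨hpA _ (p.dart_fst_mem_support_of_mem_darts he), hrB _ he₁r⟩, hqC _ he₁⟩
  refine absurd (q.support_takeUntil_subset_support he₁ ?_) he₂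
  exact ht.isAcyclic.mem_support_of_ne_mem_support_of_adj_of_isPath (hq.takeUntil he₁)
    (hr.takeUntil he₂r) e.adj fun h => he₁r (r.support_takeUntil_subset_support he₂r h)

theorem exists_mem_of_isPathClosed {ι : Type*} (ht : t.IsTree) (s : Finset ι) (A : ι → Set T)
    (hA : ∀ i ∈ s, t.IsPathClosed (A i)) (hAA : ∀ i ∈ s, ∀ j ∈ s, (A i ∩ A j).Nonempty) :
    ∃ x, ∀ i ∈ s, x ∈ A i := by
  classical
  induction s using Finset.induction_on generalizing A with
  | empty =>
    obtain ⟨x⟩ := ht.connected.nonempty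
    exact ⟨x, by simp⟩
  | insert a s _ ih =>
    have ha := Finset.mem_insert_self a s
    have hs : ∀ i ∈ s, i ∈ insert a s := fun i => Finset.mem_insert_of_mem
    obtain ⟨x, hx⟩ := ih (fun i => A i ∩ A a) (fun i hi => (hA i (hs i hi)).inter (hA a ha))
      fun i hi j hj => by
        obtain ⟨x, ⟨hxi, hxj⟩, hxa⟩ := ht.inter_inter_nonempty (hA i (hs i hi)) (hA j (hs j hj))
          (hA a ha) (hAA i (hs i hi) j (hs j hj)) (hAA j (hs j hj) a ha) (hAA a ha i (hs i hi))
        exact ⟨x, ⟨hxi, hxa⟩, hxj, hxa⟩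
    rcases s.eq_empty_or_nonempty with rfl | ⟨i₀, hi₀⟩
    · obtain ⟨y, hy, -⟩ := hAA a ha a ha
      exact ⟨y, by simpa using hy⟩
    · exact ⟨x, Finset.forall_mem_insert _ _ _ |>.mpr ⟨(hx i₀ hi₀).2, fun i hi => (hx i hi).1⟩⟩

end IsTree

variable {T₁ T₂ : Type*} {t₁ : SimpleGraph T₁} {t₂ : SimpleGraph T₂}

/-- Acyclicity is read off the edge count. -/
theorem IsTree.sum_sup_edge [Finite T₁] [Finite T₂] (h₁ : t₁.IsTree) (h₂ : t₂.IsTree)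
    (n₁ : T₁) (n₂ : T₂) : (t₁.sum t₂ ⊔ edge (.inl n₁) (.inr n₂)).IsTree := by
  rw [isTree_iff_connected_and_card] at h₁ h₂ ⊢
  refine ⟨h₁.1.sum_sup_edge h₂.1, ?_⟩
  have hedge := edgeSet_edge_of_ne (Sum.inl_ne_inr : (.inl n₁ : T₁ ⊕ T₂) ≠ .inr n₂)
  have hdisj : Disjoint (t₁.sum t₂).edgeSet (edge (.inl n₁) (.inr n₂)).edgeSet := by
    simp [hedge]
  rw [edgeSet_sup, Nat.card_coe_set_eq, Set.ncard_union_eq hdisj, ← Nat.card_coe_set_eq,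
    Nat.card_congr edgeSetSumEquiv, Nat.card_sum, Nat.card_sum, hedge, Set.ncard_singleton]
  omega

end SimpleGraph

section TreeDecomp

variable {V : Type}

def TreeDecomp.nodes (d : TreeDecomp V) (v : V) : Set d.T := {i | v ∈ d.β i}

theorem TreeDecomp.exists_subset_bag (d : TreeDecomp V)
    (hd : ∀ v, d.tree.IsPathClosed (d.nodes v)) {K : Set V} (hK : K.Finite)
    (hcover : ∀ v ∈ K, ∃ i, v ∈ d.β i)
    (hpair : ∀ u ∈ K, ∀ v ∈ K, u ≠ v → ∃ i, u ∈ d.β i ∧ v ∈ d.β i) : ∃ i, K ⊆ d.β i := by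
  obtain ⟨i, hi⟩ := d.isTree.exists_mem_of_isPathClosed hK.toFinset d.nodes
    (fun v _ => hd v) fun u hu v hv => by
      rw [Set.Finite.mem_toFinset] at hu hv
      obtain rfl | huv := eq_or_ne u v
      · obtain ⟨i, hi⟩ := hcover u hu
        exact ⟨i, hi, hi⟩
      · exact hpair u hu v hv huv
  exact ⟨i, fun v hv => hi v (hK.mem_toFinset.mpr hv)⟩

namespace IsTD

variable {g h : SimpleGraph V} {d : TreeDecomp V}

theorem isPathClosed (hd : IsTD g d) (v : V) : d.tree.IsPathClosed (d.nodes v) :=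
  fun i k p hp hi hk j hj => hd.2.2 i j k p hp hj ⟨hi, hk⟩

theorem mono (hgh : g ≤ h) (hd : IsTD h d) : IsTD g d :=
  ⟨hd.1, fun u v huv => hd.2.1 u v (hgh huv), hd.2.2⟩

/-- For a cycle `x₀ x₁ ⋯ xₖ₋₁`, the subtrees of `x₁`, of `x₀` and of the arc `x₂ ⋯ xₖ₋₁` pairwise
meet, so by the Helly property one bag holds `x₀`, `x₁` and some `xⱼ` of the arc: a chord. -/
theorem isChordal (hd : IsTD g d) (hclique : ∀ i, g.IsClique (d.β i)) : IsChordal g := by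
  intro v c hc hlen
  set k := c.length
  set x := c.getVert
  have hx₀ : x 0 = v := c.getVert_zero
  have hxk : x k = v := c.getVert_length
  have hmeet : ∀ j < k, (d.nodes (x j) ∩ d.nodes (x (j + 1))).Nonempty :=
    fun j hj => hd.2.1 _ _ (c.adj_getVert_succ hj)
  have harc := d.isTree.isPathClosed_iUnion_Icc (fun j => d.nodes (x j))
    (fun j => hd.isPathClosed (x j)) (m := 2) (n := k - 1) (by omega)
    fun j _ hj => hmeet j (by omega)
  obtain ⟨i, hi, hi'⟩ := hmeet (k - 1) (by omega)
  rw [show k - 1 + 1 = k by omega, hxk, ← hx₀] at hi'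
  obtain ⟨z, ⟨hz₁, hzarc⟩, hz₀⟩ := d.isTree.inter_inter_nonempty (hd.isPathClosed (x 1)) harc
    (hd.isPathClosed (x 0)) ((hmeet 1 (by omega)).mono fun i hi =>
      ⟨hi.1, Set.mem_biUnion (x := 2) ⟨le_rfl, by omega⟩ hi.2⟩)
    ⟨i, Set.mem_biUnion ⟨by omega, le_rfl⟩ hi, hi'⟩ (Set.inter_comm _ _ ▸ hmeet 0 (by omega))
  obtain ⟨j, ⟨hj₂, hjk⟩, hzj⟩ := Set.mem_iUnion₂.mp hzarc
  have hne : ∀ i, i < j → x i ≠ x j := fun i hij h =>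
    hij.ne (hc.getVert_injOn' (by simp; omega) (by simp; omega) h)
  by_cases hj : j + 1 < k
  · refine ⟨x 0, x j, c.getVert_mem_support 0, c.getVert_mem_support j,
      hclique z hz₀ hzj (hne 0 (by omega)), hc.mk_getVert_notMem_edges hj₂ (by omega) fun _ => hj⟩
  · refine ⟨x 1, x j, c.getVert_mem_support 1, c.getVert_mem_support j,
      hclique z hz₁ hzj (hne 1 (by omega)), hc.mk_getVert_notMem_edges (by omega) (by omega) ?_⟩
    omega

end IsTD

end TreeDecomp

namespace TreeDecomp

variable {V : Type}

def glue (d₁ d₂ : TreeDecomp V) (n₁ : d₁.T) (n₂ : d₂.T) : TreeDecomp V where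
  T := d₁.T ⊕ d₂.T
  tFinite := have := d₁.tFinite; have := d₂.tFinite; inferInstance
  tree := d₁.tree.sum d₂.tree ⊔ edge (.inl n₁) (.inr n₂)
  isTree := have := d₁.tFinite; have := d₂.tFinite; d₁.isTree.sum_sup_edge d₂.isTree n₁ n₂
  β := Sum.elim d₁.β d₂.β

theorem isPathClosed_glue_nodes {d₁ d₂ : TreeDecomp V} {n₁ : d₁.T} {n₂ : d₂.T} {v : V}
    (h₁ : d₁.tree.IsPathClosed (d₁.nodes v)) (h₂ : d₂.tree.IsPathClosed (d₂.nodes v))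
    (hn : ∀ i k, v ∈ d₁.β i → v ∈ d₂.β k → v ∈ d₁.β n₁ ∧ v ∈ d₂.β n₂) :
    (d₁.glue d₂ n₁ n₂).tree.IsPathClosed ((d₁.glue d₂ n₁ n₂).nodes v) := by
  set d := d₁.glue d₂ n₁ n₂
  have lift₁ : ∀ i k, v ∈ d₁.β i → v ∈ d₁.β k →
      ∃ q : d.tree.Walk (.inl i) (.inl k), ∀ j ∈ q.support, j ∈ d.nodes v := by
    intro i k hi hk
    obtain ⟨q, -, hq⟩ := h₁.exists_isPath d₁.isTree.connected hi hk
    refine ⟨q.map ((Hom.ofLE le_sup_left).comp Embedding.sumInl.toHom), fun j hj => ?_⟩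
    obtain ⟨j', hj', rfl⟩ := List.mem_map.mp ((Walk.support_map _ q) ▸ hj)
    exact hq j' hj'
  have lift₂ : ∀ i k, v ∈ d₂.β i → v ∈ d₂.β k →
      ∃ q : d.tree.Walk (.inr i) (.inr k), ∀ j ∈ q.support, j ∈ d.nodes v := by
    intro i k hi hk
    obtain ⟨q, -, hq⟩ := h₂.exists_isPath d₂.isTree.connected hi hk
    refine ⟨q.map ((Hom.ofLE le_sup_left).comp Embedding.sumInr.toHom), fun j hj => ?_⟩
    obtain ⟨j', hj', rfl⟩ := List.mem_map.mp ((Walk.support_map _ q) ▸ hj)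
    exact hq j' hj'
  have cross : ∀ i k, v ∈ d₁.β i → v ∈ d₂.β k →
      ∃ q : d.tree.Walk (.inl i) (.inr k), ∀ j ∈ q.support, j ∈ d.nodes v := by
    intro i k hi hk
    obtain ⟨q₁, hq₁⟩ := lift₁ i n₁ hi (hn i k hi hk).1
    obtain ⟨q₂, hq₂⟩ := lift₂ n₂ k (hn i k hi hk).2 hk
    have hadj : d.tree.Adj (.inl n₁) (.inr n₂) := Or.inr (by simp [edge])
    refine ⟨q₁.append (.cons hadj q₂), fun j hj => ?_⟩
    rcases (Walk.mem_support_append_iff _ _).mp hj with hj | hj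
    · exact hq₁ j hj
    · rcases List.mem_cons.mp hj with rfl | hj
      exacts [hq₁ _ q₁.end_mem_support, hq₂ j hj]
  refine d.isTree.isAcyclic.isPathClosed ?_
  rintro (i | i) hi (k | k) hk
  · exact lift₁ i k hi hk
  · exact cross i k hi hk
  · obtain ⟨q, hq⟩ := cross k i hk hi
    exact ⟨q.reverse, fun j hj => hq j (List.mem_reverse.mp (q.support_reverse ▸ hj))⟩
  · exact lift₂ i k hi hk

end TreeDecomp

section CliqueTD

variable {V : Type} {G : SimpleGraph V}

structure IsCliqueTDOn (G : SimpleGraph V) (s : Set V) (d : TreeDecomp V) : Prop where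
  bag_subset : ∀ i, d.β i ⊆ s
  exists_mem_bag : ∀ v ∈ s, ∃ i, v ∈ d.β i
  exists_bag_of_adj : ∀ u ∈ s, ∀ v ∈ s, G.Adj u v → ∃ i, u ∈ d.β i ∧ v ∈ d.β i
  isPathClosed : ∀ v, d.tree.IsPathClosed (d.nodes v)
  isClique : ∀ i, G.IsClique (d.β i)

def TreeDecomp.single (s : Set V) : TreeDecomp V :=
  ⟨Unit, inferInstance, ⊥, IsTree.of_subsingleton, fun _ => s⟩

theorem isCliqueTDOn_single {s : Set V} (hs : G.IsClique s) :
    IsCliqueTDOn G s (TreeDecomp.single s) :=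
  ⟨fun _ => subset_rfl, fun _ hv => ⟨(), hv⟩, fun _ hu _ hv _ => ⟨(), hu, hv⟩,
    fun _ _ _ _ _ hi _ _ _ => hi, fun _ => hs⟩

namespace IsCliqueTDOn

variable {s s₁ s₂ : Set V} {d d₁ d₂ : TreeDecomp V}

theorem isTD (hd : IsCliqueTDOn G Set.univ d) : IsTD G d :=
  ⟨fun v => hd.exists_mem_bag v trivial,
    fun u v huv => hd.exists_bag_of_adj u trivial v trivial huv,
    fun _ j _ p hp hj v hv => hd.isPathClosed v p hp hv.1 hv.2 j hj⟩

theorem exists_subset_bag [Finite V] (hd : IsCliqueTDOn G s d) {K : Set V}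
    (hK : G.IsClique K) (hKs : K ⊆ s) : ∃ i, K ⊆ d.β i :=
  d.exists_subset_bag hd.isPathClosed K.toFinite (fun v hv => hd.exists_mem_bag v (hKs hv))
    fun u hu v hv huv => hd.exists_bag_of_adj u (hKs hu) v (hKs hv) (hK hu hv huv)

/-- Gluing along the clique `s₁ ∩ s₂`, which lies in a bag on either side by the Helly property. -/
theorem union [Finite V] (h₁ : IsCliqueTDOn G s₁ d₁) (h₂ : IsCliqueTDOn G s₂ d₂)
    (hS : G.IsClique (s₁ ∩ s₂))
    (hsplit : ∀ u ∈ s₁ ∪ s₂, ∀ v ∈ s₁ ∪ s₂, G.Adj u v → (u ∈ s₁ ∧ v ∈ s₁) ∨ (u ∈ s₂ ∧ v ∈ s₂)) :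
    ∃ d, IsCliqueTDOn G (s₁ ∪ s₂) d := by
  obtain ⟨n₁, hn₁⟩ := h₁.exists_subset_bag hS Set.inter_subset_left
  obtain ⟨n₂, hn₂⟩ := h₂.exists_subset_bag hS Set.inter_subset_right
  refine ⟨d₁.glue d₂ n₁ n₂, ?_, ?_, ?_, fun v => ?_, ?_⟩
  · rintro (i | i)
    exacts [(h₁.bag_subset i).trans Set.subset_union_left,
      (h₂.bag_subset i).trans Set.subset_union_right]
  · rintro v (hv | hv)
    · obtain ⟨i, hi⟩ := h₁.exists_mem_bag v hv
      exact ⟨.inl i, hi⟩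
    · obtain ⟨i, hi⟩ := h₂.exists_mem_bag v hv
      exact ⟨.inr i, hi⟩
  · intro u hu v hv huv
    rcases hsplit u hu v hv huv with ⟨hu, hv⟩ | ⟨hu, hv⟩
    · obtain ⟨i, hi⟩ := h₁.exists_bag_of_adj u hu v hv huv
      exact ⟨.inl i, hi⟩
    · obtain ⟨i, hi⟩ := h₂.exists_bag_of_adj u hu v hv huv
      exact ⟨.inr i, hi⟩
  · refine TreeDecomp.isPathClosed_glue_nodes (h₁.isPathClosed v) (h₂.isPathClosed v)
      fun i k hi hk => ?_
    have hv : v ∈ s₁ ∩ s₂ := ⟨h₁.bag_subset i hi, h₂.bag_subset k hk⟩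
    exact ⟨hn₁ hv, hn₂ hv⟩
  · rintro (i | i)
    exacts [h₁.isClique i, h₂.isClique i]

end IsCliqueTDOn

end CliqueTD

section Chordal

variable {V : Type} {G : SimpleGraph V}

/-- If `x` and `y` were not adjacent, a chordless path along `W` would close up through `a` to a
chordless cycle of length at least 4. -/
theorem IsChordal.adj_of_walk (hG : IsChordal G) {a x y : V} (hxy : x ≠ y) (hax : G.Adj a x)
    (hay : G.Adj a y) (W : G.Walk x y)
    (hW : ∀ w ∈ W.support, w = a ∨ G.Adj a w → w = x ∨ w = y) : G.Adj x y := by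
  obtain ⟨P, hP, hPc, hPW⟩ := W.exists_isPath_isChordless
  by_contra hnadj
  have hlen : 2 ≤ P.length := by
    by_contra! h
    interval_cases hl : P.length
    · exact hxy (Walk.eq_of_length_eq_zero hl)
    · exact hnadj (Walk.adj_of_length_eq_one hl)
  have haP : a ∉ P.support := fun ha => by
    rcases hW a (hPW ha) (Or.inl rfl) with rfl | rfl
    exacts [hax.ne rfl, hay.ne rfl]
  set c := Walk.cons hax (P.concat hay.symm)
  have hc : c.IsCycle := by
    refine (Walk.cons_isCycle_iff _ _).mpr ⟨hP.concat haP _, fun he => ?_⟩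
    rw [Walk.edges_concat, List.concat_eq_append, List.mem_append, List.mem_singleton] at he
    rcases he with he | he
    · exact haP (P.fst_mem_support_of_mem_edges he)
    · rcases Sym2.eq_iff.mp he with ⟨rfl, -⟩ | ⟨-, rfl⟩
      exacts [hay.ne rfl, hxy rfl]
  obtain ⟨u, w, hu, hw, huw, hne⟩ := hG a c hc (by simp [c]; omega)
  have hsupp : ∀ u ∈ c.support, u = a ∨ u ∈ P.support := by
    intro u hu
    simp only [c, Walk.support_cons, Walk.support_concat, List.mem_cons, List.mem_append] at hu
    tauto
  have haw : ∀ w ∈ P.support, G.Adj a w → s(a, w) ∈ c.edges := fun w hw hadj => by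
    rcases hW w (hPW hw) (Or.inr hadj) with rfl | rfl
    · simp [c]
    · simp [c, Sym2.eq_swap]
  apply hne
  rcases hsupp u hu with rfl | huP
  · rcases hsupp w hw with rfl | hwP
    · exact absurd rfl huw.ne
    · exact haw w hwP huw
  · rcases hsupp w hw with rfl | hwP
    · exact Sym2.eq_swap ▸ haw u huP huw.symm
    · simp [c, hPc.mem_edges huP hwP huw]

theorem IsChordal.isClique_setOf_adj (hG : IsChordal G) {a : V} {X C : Set V}
    (hX : ∀ w ∈ X, ¬(w = a ∨ G.Adj a w))
    (hC : ∀ c₁ ∈ C, ∀ c₂ ∈ C, ∃ p : G.Walk c₁ c₂, ∀ w ∈ p.support, w ∈ X) :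
    G.IsClique {x | G.Adj a x ∧ ∃ c ∈ C, G.Adj c x} := by
  rintro x ⟨hax, c₁, hc₁, hx⟩ y ⟨hay, c₂, hc₂, hy⟩ hxy
  obtain ⟨p, hp⟩ := hC c₁ hc₁ c₂ hc₂
  refine hG.adj_of_walk hxy hax hay (.cons hx.symm (p.concat hy)) fun w hw hwa => ?_
  simp only [Walk.support_cons, Walk.support_concat, List.mem_cons, List.mem_append,
    List.mem_nil_iff, or_false] at hw
  rcases hw with hw | hw | hw
  exacts [Or.inl hw, absurd hwa (hX w (hp w hw)), Or.inr hw]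

/-- Take the component `C` of `b` outside the closed neighbourhood of `a`, and its boundary `S`,
which lies in the neighbourhood of `a`; then `C ∪ S` and `s \ C` split `s` along `S`. -/
theorem IsChordal.exists_cliqueSeparation (hG : IsChordal G) {s : Set V} {a b : V} (hb : b ∈ s)
    (hab : a ≠ b) (hnadj : ¬G.Adj a b) :
    ∃ s₁ s₂, s₁ ∪ s₂ = s ∧ a ∉ s₁ ∧ b ∉ s₂ ∧ G.IsClique (s₁ ∩ s₂) ∧
      ∀ u ∈ s, ∀ v ∈ s, G.Adj u v → (u ∈ s₁ ∧ v ∈ s₁) ∨ (u ∈ s₂ ∧ v ∈ s₂) := by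
  set X := {v ∈ s | ¬(v = a ∨ G.Adj a v)}
  set C := {c | ∃ p : G.Walk b c, ∀ v ∈ p.support, v ∈ X}
  set S := {x ∈ s | x ∉ C ∧ ∃ c ∈ C, G.Adj c x}
  have hCX : C ⊆ X := fun c ⟨p, hp⟩ => hp c p.end_mem_support
  have hbC : b ∈ C :=
    ⟨.nil, fun v hv => List.mem_singleton.mp hv ▸ ⟨hb, fun h => h.elim (hab ∘ Eq.symm) hnadj⟩⟩
  have hSa : ∀ x ∈ S, G.Adj a x := by
    rintro x ⟨hxs, hxC, c, ⟨p, hp⟩, hcx⟩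
    by_contra hax
    have hxX : x ∈ X := ⟨hxs, fun h => h.elim
      (fun hxa => (hp c p.end_mem_support).2 (Or.inr (hxa ▸ hcx.symm))) hax⟩
    refine hxC ⟨p.concat hcx, fun w hw => ?_⟩
    rw [Walk.support_concat, List.mem_append, List.mem_singleton] at hw
    exact hw.elim (hp w) fun h => h ▸ hxX
  have hCwalk : ∀ c₁ ∈ C, ∀ c₂ ∈ C, ∃ p : G.Walk c₁ c₂, ∀ w ∈ p.support, w ∈ X := by
    rintro c₁ ⟨p₁, hp₁⟩ c₂ ⟨p₂, hp₂⟩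
    refine ⟨p₁.reverse.append p₂, fun w hw => ?_⟩
    rw [Walk.mem_support_append_iff, Walk.support_reverse, List.mem_reverse] at hw
    exact hw.elim (hp₁ w) (hp₂ w)
  have hSclique : G.IsClique S := by
    refine (hG.isClique_setOf_adj (fun w hw => hw.2) hCwalk).subset fun x hx => ?_
    exact ⟨hSa x hx, hx.2.2⟩
  refine ⟨C ∪ S, s \ C, ?_, ?_, fun h => h.2 hbC, hSclique.subset ?_, ?_⟩
  · ext v
    have : v ∈ C → v ∈ s := fun hv => (hCX hv).1
    simp only [S, Set.mem_union, Set.mem_sdiff, Set.mem_ofPred_eq]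
    tauto
  · rintro (haC | haS)
    exacts [(hCX haC).2 (Or.inl rfl), (hSa a haS).ne rfl]
  · rintro v ⟨hvC | hvS, -, hvC'⟩
    exacts [absurd hvC hvC', hvS]
  · intro u hu v hv huv
    simp only [S, Set.mem_union, Set.mem_sdiff, Set.mem_ofPred_eq]
    by_cases huC : u ∈ C <;> by_cases hvC : v ∈ C
    · tauto
    · exact Or.inl ⟨Or.inl huC, Or.inr ⟨hv, hvC, u, huC, huv⟩⟩
    · exact Or.inl ⟨Or.inr ⟨hu, huC, v, hvC, huv.symm⟩, Or.inl hvC⟩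
    · tauto

theorem IsChordal.exists_isCliqueTDOn [Finite V] (hG : IsChordal G) (s : Set V) :
    ∃ d, IsCliqueTDOn G s d := by
  induction hn : s.ncard using Nat.strong_induction_on generalizing s with
  | _ n ih =>
  by_cases hs : G.IsClique s
  · exact ⟨_, isCliqueTDOn_single hs⟩
  obtain ⟨a, ha, b, hb, hab, hnadj⟩ : ∃ a ∈ s, ∃ b ∈ s, a ≠ b ∧ ¬G.Adj a b := by
    simpa [IsClique, Set.Pairwise] using hs
  obtain ⟨s₁, s₂, rfl, ha₁, hb₂, hS, hsplit⟩ := hG.exists_cliqueSeparation hb hab hnadj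
  have hlt : ∀ {t u : Set V}, t ⊆ u → ∀ x ∈ u, x ∉ t → t.ncard < u.ncard :=
    fun htu x hx hxt => Set.ncard_lt_ncard ⟨htu, fun h => hxt (h hx)⟩
  obtain ⟨d₁, hd₁⟩ := ih _ (hn ▸ hlt Set.subset_union_left a ha ha₁) s₁ rfl
  obtain ⟨d₂, hd₂⟩ := ih _ (hn ▸ hlt Set.subset_union_right b hb hb₂) s₂ rfl
  exact hd₁.union hd₂ hS hsplit

end Chordal

section Saturate

variable {V : Type} {g h : SimpleGraph V} {d d' : TreeDecomp V}

theorem le_saturate : g ≤ saturate g d := fun _ _ => Or.inl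

theorem isClique_saturate_bag (i : d.T) : (saturate g d).IsClique (d.β i) :=
  fun _ hu _ hv huv => Or.inr ⟨huv, i, hu, hv⟩

theorem IsTD.saturate (hd : IsTD g d) : IsTD (saturate g d) d := by
  refine ⟨hd.1, ?_, hd.2.2⟩
  rintro u v (huv | ⟨-, i, hu, hv⟩)
  exacts [hd.2.1 u v huv, ⟨i, hu, hv⟩]

theorem saturate_le (hgh : g ≤ h) (hsub : Subsumes d' d) (hclique : ∀ i, h.IsClique (d.β i)) :
    saturate g d' ≤ h := by
  rintro u v (huv | ⟨huv, i, hu, hv⟩)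
  · exact hgh huv
  · obtain ⟨_, ⟨j, rfl⟩, hij⟩ := hsub _ ⟨i, rfl⟩
    exact hclique j (hij hu) (hij hv) huv

theorem saturate_eq (hgh : g ≤ h) (hd : IsTD h d) (hclique : ∀ i, h.IsClique (d.β i)) :
    saturate g d = h :=
  le_antisymm (saturate_le hgh (fun b hb => ⟨b, hb, subset_rfl⟩) hclique)
    fun u v huv => Or.inr ⟨huv.ne, hd.2.1 u v huv⟩

end Saturate

theorem IsChordal.isClique_of_isProperTD {V : Type} [Finite V] {h : SimpleGraph V}
    {d : TreeDecomp V} (hh : IsChordal h) (hd : IsProperTD h d) (i : d.T) :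
    h.IsClique (d.β i) := by
  obtain ⟨d', hd'⟩ := hh.exists_isCliqueTDOn Set.univ
  have hsub : Subsumes d' d := by
    rintro _ ⟨j, rfl⟩
    obtain ⟨i, hi⟩ := d.exists_subset_bag hd.1.isPathClosed (Set.toFinite _)
      (fun v _ => hd.1.1 v) fun u hu v hv huv => hd.1.2.1 u v (hd'.isClique j hu hv huv)
    exact ⟨_, ⟨i, rfl⟩, hi⟩
  have hbags : d.bags ⊆ d'.bags := by
    by_contra hbags
    exact hd.2 d' hd'.isTD ⟨hsub, hbags⟩
  obtain ⟨j, hj⟩ := hbags ⟨i, rfl⟩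
  exact hj ▸ hd'.isClique j

/-- A proper tree decomposition `d` of a minimal triangulation `h` of `g` is a
proper tree decomposition of `g`, and `saturate g d = h`. -/
theorem proper_td_of_minTri {V : Type} [Fintype V] (g h : SimpleGraph V)
    (hh : h ∈ MinTri g) (d : TreeDecomp V) (hd : IsProperTD h d) :
    IsProperTD g d ∧ saturate g d = h := by
  obtain ⟨hgh, hchordal, hmin⟩ := hh
  have hclique := hchordal.isClique_of_isProperTD hd
  refine ⟨⟨hd.1.mono hgh, fun d' hd' hstrict => ?_⟩, saturate_eq hgh hd.1 hclique⟩
  have hsat : saturate g d' = h := by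
    by_contra hne
    exact hmin _ le_saturate ((saturate_le hgh hstrict.1 hclique).lt_of_ne hne)
      (hd'.saturate.isChordal isClique_saturate_bag)
  exact hd.2 d' (hsat ▸ hd'.saturate) hstrict
end

section
/- Let g be a finite simple graph, let φ be a set of pairwise parallel minimal separators of g, and let g_t be a minimal triangulation of the graph g_[φ]. Then φ ⊆ MinSep(g_t); that is, every member of φ is a minimal separator of g_t. -/
open SimpleGraph

/-- `S` is a `(u,v)`-separator of `g`: `u` and `v` lie in distinct connected
components of `g` with the vertices of `S` deleted. -/
def IsSep {V : Type} (g : SimpleGraph V) (u v : V) (S : Set V) : Prop :=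
  ∃ (hu : u ∈ Sᶜ) (hv : v ∈ Sᶜ),
    ¬ (g.induce Sᶜ).Reachable ⟨u, hu⟩ ⟨v, hv⟩

/-- `S` is a minimal `(u,v)`-separator of `g`. -/
def IsMinSepPair {V : Type} (g : SimpleGraph V) (u v : V) (S : Set V) : Prop :=
  IsSep g u v S ∧ ∀ S' : Set V, S' ⊂ S → ¬ IsSep g u v S'

/-- The set of minimal separators of `g`. -/
def MinSep {V : Type} (g : SimpleGraph V) : Set (Set V) :=
  {S | ∃ u v : V, IsMinSepPair g u v S}

/-- `S` crosses `T`. -/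
def Crosses {V : Type} (g : SimpleGraph V) (S T : Set V) : Prop :=
  ∃ u ∈ T, ∃ v ∈ T, IsSep g u v S

/-- `φ` is a set of pairwise parallel (non-crossing) minimal separators of `g`. -/
def PairwiseParallel {V : Type} (g : SimpleGraph V) (φ : Set (Set V)) : Prop :=
  φ ⊆ MinSep g ∧ φ.Pairwise fun S T => ¬ Crosses g S T

/-- `φ` is a maximal set of pairwise parallel minimal separators of `g`. -/
def MaxPairwiseParallel {V : Type} (g : SimpleGraph V) (φ : Set (Set V)) : Prop :=
  PairwiseParallel g φ ∧ ∀ ψ : Set (Set V), PairwiseParallel g ψ → φ ⊆ ψ → φ = ψ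

/-- `g_[φ]`: the graph obtained from `g` by saturating every member of `φ`. -/
def satSet {V : Type} (g : SimpleGraph V) (φ : Set (Set V)) : SimpleGraph V where
  Adj u v := g.Adj u v ∨ (u ≠ v ∧ ∃ S ∈ φ, u ∈ S ∧ v ∈ S)
  symm := by
    constructor
    intro u v h
    rcases h with h | ⟨hne, S, hS, hu, hv⟩
    · exact Or.inl h.symm
    · exact Or.inr ⟨hne.symm, S, hS, hv, hu⟩
  loopless := by
    constructor
    intro u h
    rcases h with h | ⟨hne, _⟩
    · exact g.loopless.irrefl u h
    · exact hne rfl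

/-- The neighborhood of a set `U` of vertices: vertices outside `U` adjacent to `U`. -/
def nbhd {V : Type} (g : SimpleGraph V) (U : Set V) : Set V :=
  {v | v ∉ U ∧ ∃ u ∈ U, g.Adj u v}

/-- `c` is (the vertex set of) a connected component of `g − S`. -/
def IsCompOf {V : Type} (g : SimpleGraph V) (S : Set V) (c : Set V) : Prop :=
  c ⊆ Sᶜ ∧ (g.induce c).Connected ∧
  ∀ u ∈ c, ∀ v : V, v ∉ S → g.Adj u v → v ∈ c

/-!
Fix `S ∈ φ`, a minimal `(u,v)`-separator of `g`. Since the members of `φ` do not cross `S`, the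
edges added by saturating them never join two components of `g - S`, so `S` is a clique
separating `u` from `v` in `h = g_[φ]`. In a chordal supergraph of `h`, deleting every edge that
joins two components of `h - S` keeps it chordal: a cycle using none of these edges but having one
as a chord crosses the clique `S` on both arcs, and those two vertices of `S` give another chord.
By minimality `g_t` has no such edge, so `S` still separates `u` from `v` in `g_t`, and it stays
minimal since `g ≤ g_t`.
-/

section

variable {V : Type}

theorem SimpleGraph.Reachable.of_forall_adj {G H : SimpleGraph V}
    (h : ∀ x y, G.Adj x y → H.Reachable x y) {u v : V} (huv : G.Reachable u v) :
    H.Reachable u v := by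
  obtain ⟨w⟩ := huv
  induction w with
  | nil => rfl
  | cons hadj _ ih => exact (h _ _ hadj).trans ih

namespace IsSep

variable {G H : SimpleGraph V} {S : Set V} {u v : V}

theorem symm (h : IsSep G u v S) : IsSep G v u S :=
  let ⟨hu, hv, hnr⟩ := h
  ⟨hv, hu, fun hr => hnr hr.symm⟩

theorem not_of_adj (huv : G.Adj u v) : ¬ IsSep G u v S :=
  fun ⟨hu, hv, hnr⟩ => hnr (Adj.reachable (show (G.induce Sᶜ).Adj ⟨u, hu⟩ ⟨v, hv⟩ from huv))

theorem exists_mem_support (h : IsSep G u v S) (w : G.Walk u v) : ∃ z ∈ w.support, z ∈ S := by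
  obtain ⟨hu, hv, hnr⟩ := h
  by_contra! hw
  exact hnr ⟨w.induce Sᶜ hw⟩

theorem of_forall_adj (hH : ∀ x y, H.Adj x y → ¬ IsSep G x y S) (h : IsSep G u v S) :
    IsSep H u v S := by
  obtain ⟨hu, hv, hnr⟩ := h
  refine ⟨hu, hv, fun hr => hnr (hr.of_forall_adj ?_)⟩
  rintro ⟨x, hx⟩ ⟨y, hy⟩ hxy
  by_contra hn
  exact hH x y hxy ⟨hx, hy, hn⟩

theorem anti (hGH : G ≤ H) (h : IsSep H u v S) : IsSep G u v S :=
  h.of_forall_adj fun _ _ hxy => not_of_adj (hGH hxy)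

end IsSep

theorem IsMinSepPair.of_le {G H : SimpleGraph V} {S : Set V} {u v : V} (hGH : G ≤ H)
    (hmin : IsMinSepPair G u v S) (hsep : IsSep H u v S) : IsMinSepPair H u v S :=
  ⟨hsep, fun S' hS' hsep' => hmin.2 S' hS' (hsep'.anti hGH)⟩

namespace SimpleGraph.Walk

variable {G : SimpleGraph V}

theorem mem_tail_support_of_ne {u v x : V} {p : G.Walk u v} (hx : x ∈ p.support) (hxu : x ≠ u) :
    x ∈ p.support.tail :=
  (p.mem_support_iff.mp hx).resolve_left hxu

/-- The two vertices are taken one on each arc of the cycle between `a` and `b`. -/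
theorem IsCycle.exists_nonadjacent_pair_of_isSep_start {a b : V} {Q : Set V} {c : G.Walk a a}
    (hc : c.IsCycle) (hb : b ∈ c.support) (hsep : IsSep G a b Q) :
    ∃ s₁ ∈ c.support, ∃ s₂ ∈ c.support, s₁ ∈ Q ∧ s₂ ∈ Q ∧ s₁ ≠ s₂ ∧ s(s₁, s₂) ∉ c.edges := by
  classical
  have haQ : a ∉ Q := hsep.1
  have hbQ : b ∉ Q := hsep.2.1
  set p := c.takeUntil b hb
  set q := c.dropUntil b hb
  have hpq : p.append q = c := c.take_spec hb
  have hdisj : ∀ x ∈ p.support.tail, x ∉ q.support.tail := by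
    have hnd := hc.support_nodup
    rw [← hpq, tail_support_append, List.nodup_append] at hnd
    exact fun x hxp hxq => hnd.2.2 x hxp x hxq rfl
  obtain ⟨s₁, hs₁p, hs₁Q⟩ := hsep.exists_mem_support p
  obtain ⟨s₂, hs₂q, hs₂Q⟩ := hsep.exists_mem_support q.reverse
  rw [support_reverse, List.mem_reverse] at hs₂q
  have ne_of_mem {x y : V} (hx : x ∈ Q) (hy : y ∉ Q) : x ≠ y := fun e => hy (e ▸ hx)
  have hs₁ : s₁ ∈ p.support.tail := mem_tail_support_of_ne hs₁p (ne_of_mem hs₁Q haQ)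
  have hs₂ : s₂ ∈ q.support.tail := mem_tail_support_of_ne hs₂q (ne_of_mem hs₂Q hbQ)
  refine ⟨s₁, c.support_takeUntil_subset_support hb hs₁p,
    s₂, c.support_dropUntil_subset_support hb hs₂q, hs₁Q, hs₂Q, fun e => hdisj s₁ hs₁ (e ▸ hs₂), ?_⟩
  rw [← hpq, edges_append, List.mem_append]
  rintro (he | he)
  · exact hdisj s₂ (mem_tail_support_of_ne (p.snd_mem_support_of_mem_edges he)
      (ne_of_mem hs₂Q haQ)) hs₂
  · exact hdisj s₁ hs₁ (mem_tail_support_of_ne (q.fst_mem_support_of_mem_edges he)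
      (ne_of_mem hs₁Q hbQ))

theorem IsCycle.exists_nonadjacent_pair_of_isSep {v a b : V} {Q : Set V} {c : G.Walk v v}
    (hc : c.IsCycle) (ha : a ∈ c.support) (hb : b ∈ c.support) (hsep : IsSep G a b Q) :
    ∃ s₁ ∈ c.support, ∃ s₂ ∈ c.support, s₁ ∈ Q ∧ s₂ ∈ Q ∧ s₁ ≠ s₂ ∧ s(s₁, s₂) ∉ c.edges := by
  classical
  obtain ⟨s₁, h₁, s₂, h₂, hQ₁, hQ₂, hne, hnot⟩ :=
    (hc.rotate ha).exists_nonadjacent_pair_of_isSep_start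
      ((mem_support_rotate_iff c a ha).mpr hb) hsep
  exact ⟨s₁, (mem_support_rotate_iff c a ha).mp h₁, s₂, (mem_support_rotate_iff c a ha).mp h₂,
    hQ₁, hQ₂, hne, fun he => hnot ((rotate_edges c a ha).mem_iff.mpr he)⟩

end SimpleGraph.Walk

theorem IsChordal.of_le {G K : SimpleGraph V} {S : Set V} (hG : IsChordal G) (hKG : K ≤ G)
    (hS : K.IsClique S) (hsep : ∀ a b, G.Adj a b → ¬ K.Adj a b → IsSep K a b S) :
    IsChordal K := by
  intro v c hc hlen
  obtain ⟨a, b, ha, hb, hab, hnot⟩ :=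
    hG v (c.mapLe hKG) (hc.mapLe hKG) (by rwa [Walk.length_mapLe])
  rw [Walk.support_mapLe_eq_support] at ha hb
  rw [Walk.edges_mapLe_eq_edges] at hnot
  by_cases hKab : K.Adj a b
  · exact ⟨a, b, ha, hb, hKab, hnot⟩
  obtain ⟨s₁, h₁, s₂, h₂, hS₁, hS₂, hne, hnot'⟩ :=
    hc.exists_nonadjacent_pair_of_isSep ha hb (hsep a b hab hKab)
  exact ⟨s₁, s₂, h₁, h₂, hS hS₁ hS₂ hne, hnot'⟩

def deleteSepEdges (G H : SimpleGraph V) (S : Set V) : SimpleGraph V where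
  Adj x y := G.Adj x y ∧ ¬ IsSep H x y S
  symm := ⟨fun _ _ h => ⟨h.1.symm, fun hs => h.2 hs.symm⟩⟩
  loopless := ⟨fun _ h => G.loopless.irrefl _ h.1⟩

section deleteSepEdges

variable {G H : SimpleGraph V} {S : Set V}

theorem deleteSepEdges_le : deleteSepEdges G H S ≤ G :=
  fun _ _ h => h.1

theorem le_deleteSepEdges (hHG : H ≤ G) : H ≤ deleteSepEdges G H S :=
  fun _ _ h => ⟨hHG h, IsSep.not_of_adj h⟩

theorem IsSep.deleteSepEdges {u v : V} (h : IsSep H u v S) :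
    IsSep (deleteSepEdges G H S) u v S :=
  h.of_forall_adj fun _ _ hxy => hxy.2

theorem IsChordal.deleteSepEdges (hG : IsChordal G) (hHG : H ≤ G) (hS : H.IsClique S) :
    IsChordal (deleteSepEdges G H S) :=
  hG.of_le deleteSepEdges_le (hS.mono (le_deleteSepEdges hHG)) fun _ _ hab hnot =>
    IsSep.deleteSepEdges (not_not.mp fun hn => hnot ⟨hab, hn⟩)

end deleteSepEdges

theorem eq_of_mem_minTri {H K T : SimpleGraph V} (hT : T ∈ MinTri H) (hHK : H ≤ K)
    (hKT : K ≤ T) (hK : IsChordal K) : K = T := by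
  by_contra hne
  exact hT.2.2 K hHK (lt_of_le_of_ne hKT hne) hK

theorem not_isSep_of_adj_of_mem_minTri {H T : SimpleGraph V} {S : Set V} (hT : T ∈ MinTri H)
    (hS : H.IsClique S) {x y : V} (hxy : T.Adj x y) : ¬ IsSep H x y S :=
  ((eq_of_mem_minTri hT (le_deleteSepEdges hT.1) deleteSepEdges_le
    (hT.2.1.deleteSepEdges hT.1 hS)).ge hxy).2

theorem isClique_satSet {g : SimpleGraph V} {φ : Set (Set V)} {S : Set V} (hS : S ∈ φ) :
    (satSet g φ).IsClique S :=
  fun _ hx _ hy hne => Or.inr ⟨hne, S, hS, hx, hy⟩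

theorem PairwiseParallel.not_isSep_of_satSet_adj {g : SimpleGraph V} {φ : Set (Set V)}
    (hφ : PairwiseParallel g φ) {S : Set V} (hS : S ∈ φ) {x y : V}
    (hxy : (satSet g φ).Adj x y) : ¬ IsSep g x y S := by
  rcases hxy with hg | ⟨-, T, hT, hxT, hyT⟩
  · exact IsSep.not_of_adj hg
  · intro hsep
    by_cases hTS : T = S
    · exact hsep.1 (hTS ▸ hxT)
    · exact hφ.2 hS hT (Ne.symm hTS) ⟨x, hxT, y, hyT, hsep⟩

end

theorem extension_lemma_general {V : Type} (g : SimpleGraph V)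
    (φ : Set (Set V)) (hφ : PairwiseParallel g φ)
    (gt : SimpleGraph V) (hgt : gt ∈ MinTri (satSet g φ)) :
    φ ⊆ MinSep gt := by
  intro S hS
  obtain ⟨u, v, hmin⟩ := hφ.1 hS
  have hsep : IsSep gt u v S :=
    (hmin.1.of_forall_adj fun _ _ => hφ.not_isSep_of_satSet_adj hS).of_forall_adj
      fun _ _ => not_isSep_of_adj_of_mem_minTri hgt (isClique_satSet hS)
  exact ⟨u, v, hmin.of_le (fun _ _ h => hgt.1 (Or.inl h)) hsep⟩

/-- If `φ` is a set of pairwise parallel minimal separators of `g` and `g_t` is a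
minimal triangulation of `g_[φ]`, then every member of `φ` is a minimal separator
of `g_t`. -/
theorem extension_lemma {V : Type} [Fintype V] (g : SimpleGraph V)
    (φ : Set (Set V)) (hφ : PairwiseParallel g φ)
    (gt : SimpleGraph V) (hgt : gt ∈ MinTri (satSet g φ)) :
    φ ⊆ MinSep gt :=
  extension_lemma_general g φ hφ gt hgt
end

section
/- Let g be a connected finite simple graph and let S be a minimal separator of g whose vertices are pairwise adjacent (a clique). Then for every connected component c of g − S and every subset S' ⊆ S, the set S' is not a minimal separator of the induced subgraph g[c ∪ N_g(c)]. -/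
open SimpleGraph

/-! Removing from `g[c ∪ N_g(c)]` any set of vertices that misses `c` leaves `c` intact, and
every surviving vertex lies in `c` or has a neighbour in `c`; since `g[c]` is connected, what
remains is connected, so nothing inside `N_g(c) ⊆ S` separates `g[c ∪ N_g(c)]`. -/

namespace SimpleGraph

variable {W : Type*} {H : SimpleGraph W}

lemma preconnected_of_reachable_of_dominating {c : Set W}
    (hc : ∀ x ∈ c, ∀ y ∈ c, H.Reachable x y) (hdom : ∀ w, w ∈ c ∨ ∃ x ∈ c, H.Adj w x) :
    H.Preconnected := by
  have hreach : ∀ w, ∃ x ∈ c, H.Reachable w x := fun w =>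
    (hdom w).elim (fun hw => ⟨w, hw, .refl w⟩) fun ⟨x, hx, hadj⟩ => ⟨x, hx, hadj.reachable⟩
  intro u v
  obtain ⟨x, hx, hux⟩ := hreach u
  obtain ⟨y, hy, hvy⟩ := hreach v
  exact hux.trans ((hc x hx y hy).trans hvy.symm)

end SimpleGraph

lemma not_isSep_of_preconnected_induce_compl {W : Type} {H : SimpleGraph W} {T : Set W}
    (hT : (H.induce Tᶜ).Preconnected) (u v : W) : ¬ IsSep H u v T :=
  fun ⟨hu, hv, hnr⟩ => hnr (hT ⟨u, hu⟩ ⟨v, hv⟩)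

lemma preconnected_induce_nbhd_compl {V : Type} {g : SimpleGraph V} {c : Set V}
    (hc : (g.induce c).Connected) (T : Set ↥(c ∪ nbhd g c))
    (hT : Disjoint c (Subtype.val '' T)) :
    ((g.induce (c ∪ nbhd g c)).induce Tᶜ).Preconnected := by
  set K := (g.induce (c ∪ nbhd g c)).induce Tᶜ
  let ι : g.induce c →g K :=
    ⟨fun z => ⟨⟨z, Or.inl z.2⟩, fun hz => hT.ne_of_mem z.2 ⟨_, hz, rfl⟩ rfl⟩, id⟩
  refine preconnected_of_reachable_of_dominating (c := Set.range ι) ?_ fun w => ?_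
  · rintro _ ⟨x, rfl⟩ _ ⟨y, rfl⟩
    exact (hc x y).map ι
  · rcases w with ⟨⟨w, hwc | ⟨-, x, hx, hadj⟩⟩, -⟩
    · exact .inl ⟨⟨w, hwc⟩, rfl⟩
    · exact .inr ⟨ι ⟨x, hx⟩, ⟨_, rfl⟩, hadj.symm⟩

theorem clique_sep_not_minSep_in_components_general {V : Type}
    (g : SimpleGraph V)
    (S : Set V)
    (c : Set V) (hc : IsCompOf g S c) (S' : Set V) (hS' : S' ⊆ S) :
    ∀ T ∈ MinSep (g.induce (c ∪ nbhd g c)), Subtype.val '' T ≠ S' := by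
  rintro T ⟨u, v, hsep, -⟩ rfl
  have hdisj : Disjoint c (Subtype.val '' T) :=
    Set.disjoint_left.2 fun x hxc hxT => hc.1 hxc (hS' hxT)
  exact not_isSep_of_preconnected_induce_compl
    (preconnected_induce_nbhd_compl hc.2.1 T hdisj) u v hsep

/-- If `S` is a clique minimal separator of a connected graph `g`, then neither `S`
nor any of its subsets is a minimal separator of `g[c ∪ N_g(c)]` for any connected
component `c` of `g − S`. -/
theorem clique_sep_not_minSep_in_components {V : Type} [Fintype V]
    (g : SimpleGraph V) (hconn : g.Connected)
    (S : Set V) (hS : S ∈ MinSep g) (hclq : g.IsClique S)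
    (c : Set V) (hc : IsCompOf g S c) (S' : Set V) (hS' : S' ⊆ S) :
    ∀ T ∈ MinSep (g.induce (c ∪ nbhd g c)), Subtype.val '' T ≠ S' :=
  clique_sep_not_minSep_in_components_general g S c hc S' hS'
end

section
/- Let g be a connected finite simple graph, let S be a minimal separator of g whose vertices are pairwise adjacent (a clique), and let c1 and c2 be two distinct connected components of g − S. Then no set of vertices is simultaneously a minimal separator of the induced subgraph g[c1 ∪ N_g(c1)] and a minimal separator of the induced subgraph g[c2 ∪ N_g(c2)]; that is, MinSep(g[c1 ∪ N_g(c1)]) ∩ MinSep(g[c2 ∪ N_g(c2)]) = ∅. -/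
open SimpleGraph

/-!
Every minimal separator `T` of `g[c ∪ N(c)]`, for `c` connected, meets `c`: otherwise `c` survives
in `g[c ∪ N(c)] − T`, and every other surviving vertex lies in `N(c)`, hence is adjacent to `c`, so
`T` separates nothing. But for distinct components `c₁, c₂` of `g − S`, the set `c₂ ∪ N(c₂)` misses
`c₁`, because `N(c₂) ⊆ S`. So a common minimal separator would have to meet `c₁` and miss it.
-/

namespace SimpleGraph

theorem Preconnected.of_hom_of_forall_reachable {V W : Type} {G : SimpleGraph V}
    {H : SimpleGraph W} (hH : H.Preconnected) (f : H →g G) (hf : ∀ x, ∃ a, G.Reachable x (f a)) :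
    G.Preconnected := by
  intro x y
  obtain ⟨a, hxa⟩ := hf x
  obtain ⟨b, hyb⟩ := hf y
  exact hxa.trans (((hH a b).map f).trans hyb.symm)

end SimpleGraph

theorem not_isSep_of_preconnected {V : Type} {g : SimpleGraph V} {T : Set V}
    (hT : (g.induce Tᶜ).Preconnected) (u v : V) : ¬ IsSep g u v T :=
  fun ⟨_, _, hnr⟩ => hnr (hT _ _)

theorem preconnected_induce_union_nbhd_compl {V : Type} {g : SimpleGraph V} {c : Set V}
    (hc : (g.induce c).Preconnected) {T : Set ↥(c ∪ nbhd g c)} (hT : ∀ x ∈ T, (x : V) ∉ c) :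
    ((g.induce (c ∪ nbhd g c)).induce Tᶜ).Preconnected := by
  let f : g.induce c →g (g.induce (c ∪ nbhd g c)).induce Tᶜ :=
    ⟨fun a => ⟨⟨a, Or.inl a.2⟩, fun ha => hT _ ha a.2⟩, id⟩
  refine hc.of_hom_of_forall_reachable f fun x => ?_
  rcases x.1.2 with hx | ⟨-, a, ha, hadj⟩
  · exact ⟨⟨x, hx⟩, .rfl⟩
  · exact ⟨⟨a, ha⟩, Adj.reachable (G := (g.induce (c ∪ nbhd g c)).induce Tᶜ) hadj.symm⟩

theorem exists_mem_of_mem_minSep_induce_union_nbhd {V : Type} {g : SimpleGraph V} {c : Set V}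
    (hc : (g.induce c).Preconnected) {T : Set ↥(c ∪ nbhd g c)}
    (hT : T ∈ MinSep (g.induce (c ∪ nbhd g c))) : ∃ x ∈ T, (x : V) ∈ c := by
  by_contra! hdisj
  obtain ⟨u, v, hsep, -⟩ := hT
  exact not_isSep_of_preconnected (preconnected_induce_union_nbhd_compl hc hdisj) u v hsep

namespace IsCompOf

variable {V : Type} {g : SimpleGraph V} {S c c₁ c₂ : Set V}

theorem nbhd_subset (hc : IsCompOf g S c) : nbhd g c ⊆ S := by
  rintro v ⟨hvc, u, hu, hadj⟩
  by_contra hvS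
  exact hvc (hc.2.2 u hu v hvS hadj)

theorem mem_of_walk (hc₂ : IsCompOf g S c₂) (hc₁S : c₁ ⊆ Sᶜ) {a b : ↥c₁}
    (w : (g.induce c₁).Walk a b) (ha : (a : V) ∈ c₂) : (b : V) ∈ c₂ := by
  induction w with
  | nil => exact ha
  | cons hadj _ ih => exact ih (hc₂.2.2 _ ha _ (hc₁S (Subtype.prop _)) hadj)

theorem subset_of_mem (hc₁ : IsCompOf g S c₁) (hc₂ : IsCompOf g S c₂) {v : V}
    (hv₁ : v ∈ c₁) (hv₂ : v ∈ c₂) : c₁ ⊆ c₂ := fun w hw =>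
  let ⟨p⟩ := hc₁.2.1.preconnected ⟨v, hv₁⟩ ⟨w, hw⟩
  hc₂.mem_of_walk hc₁.1 p hv₂

theorem disjoint_union_nbhd (hc₁ : IsCompOf g S c₁) (hc₂ : IsCompOf g S c₂) (hne : c₁ ≠ c₂) :
    Disjoint c₁ (c₂ ∪ nbhd g c₂) := by
  refine Set.disjoint_left.2 fun v hv₁ hv => ?_
  rcases hv with hv₂ | hvN
  · exact hne ((hc₁.subset_of_mem hc₂ hv₁ hv₂).antisymm (hc₂.subset_of_mem hc₁ hv₂ hv₁))
  · exact hc₁.1 hv₁ (hc₂.nbhd_subset hvN)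

end IsCompOf

theorem disjoint_minSeps_of_components_general {V : Type}
    (g : SimpleGraph V)
    (S : Set V)
    (c₁ c₂ : Set V) (hc₁ : IsCompOf g S c₁) (hc₂ : IsCompOf g S c₂) (hne : c₁ ≠ c₂) :
    ∀ T₁ ∈ MinSep (g.induce (c₁ ∪ nbhd g c₁)), ∀ T₂ ∈ MinSep (g.induce (c₂ ∪ nbhd g c₂)),
      Subtype.val '' T₁ ≠ Subtype.val '' T₂ := by
  intro T₁ hT₁ T₂ _ hT
  obtain ⟨x, hxT₁, hx₁⟩ := exists_mem_of_mem_minSep_induce_union_nbhd hc₁.2.1.preconnected hT₁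
  obtain ⟨y, -, hyx⟩ : (x : V) ∈ Subtype.val '' T₂ := hT ▸ ⟨x, hxT₁, rfl⟩
  exact Set.disjoint_left.1 (hc₁.disjoint_union_nbhd hc₂ hne) hx₁ (hyx ▸ y.2)

/-- Distinct connected components of `g − S`, for a clique minimal separator `S` of a
connected graph `g`, give induced subgraphs with disjoint sets of minimal separators. -/
theorem disjoint_minSeps_of_components {V : Type} [Fintype V]
    (g : SimpleGraph V) (hconn : g.Connected)
    (S : Set V) (hS : S ∈ MinSep g) (hclq : g.IsClique S)
    (c₁ c₂ : Set V) (hc₁ : IsCompOf g S c₁) (hc₂ : IsCompOf g S c₂) (hne : c₁ ≠ c₂) :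
    ∀ T₁ ∈ MinSep (g.induce (c₁ ∪ nbhd g c₁)), ∀ T₂ ∈ MinSep (g.induce (c₂ ∪ nbhd g c₂)),
      Subtype.val '' T₁ ≠ Subtype.val '' T₂ :=
  disjoint_minSeps_of_components_general g S c₁ c₂ hc₁ hc₂ hne
end
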